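/- arXiv:1910.12793 — 3 statements merged into one kernel-verified Lean document; each statement's English description precedes it below -/
import Mathlib

section
/- Let G be a simple graph with labelling λ : V(G) → ℕ. If the 1-skeleton of the bounded degree complex BD^λ(G) contains two edges {e₁,e₂} and {f₁,f₂} with e₁ and f₁ lying in distinct connected components of BD^λ(G), then G contains a cycle of length 4; in particular, each eᵢ ∩ fⱼ is nonempty and {e₁,e₂}, {f₁,f₂} are two distinct perfect matchings on the same four vertices. -/
open Finset

/-- Degree of a vertex `v` in a finite set `H` of edges. -/
def edgeDeg {V : Type*} [DecidableEq V] (H : Finset (Sym2 V)) (v : V) : ℕ :=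
  (H.filter (fun e => v ∈ e)).card

/-- The bounded degree complex `BD^λ(G)`: its faces are the finite sets `H` of edges of `G`
such that every vertex `v` lies on at most `lam v` edges of `H`. -/
def BD {V : Type*} [DecidableEq V] (G : SimpleGraph V) (lam : V → ℕ) :
    Set (Finset (Sym2 V)) :=
  {H | ↑H ⊆ G.edgeSet ∧ ∀ v, edgeDeg H v ≤ lam v}

/-- The 1-skeleton of `BD^λ(G)`, as a graph on `Sym2 V`: two edges of `G` are adjacent when the
pair is a face of the bounded degree complex. -/
def bdAdjGraph {V : Type*} [DecidableEq V] (G : SimpleGraph V) (lam : V → ℕ) :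
    SimpleGraph (Sym2 V) where
  Adj e f := e ≠ f ∧ ({e, f} : Finset (Sym2 V)) ∈ BD G lam
  symm := by
    constructor
    intro e f h
    refine ⟨h.1.symm, ?_⟩
    rw [Finset.pair_comm]
    exact h.2
  loopless := ⟨fun e h => h.1 rfl⟩

/-!
Two edges of `G` in different components of the 1-skeleton of `BD^λ(G)` do not form a face.
Since each of them lies in some face, `λ ≥ 1` at their endpoints, so the only obstruction is a
common endpoint `v` with `λ v ≤ 1`. This gives `a ∈ e₁ ∩ f₁`, `b ∈ e₁ ∩ f₂`, `c ∈ e₂ ∩ f₂`,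
`d ∈ e₂ ∩ f₁`, all with `λ ≤ 1`. Because `{e₁, e₂}` and `{f₁, f₂}` are faces, none of these
vertices lies on both edges of either pair. Hence `a, b, c, d` are distinct, and
`e₁ = ab`, `f₂ = bc`, `e₂ = cd`, `f₁ = da`.
-/

section BoundedDegreeComplex

variable {V : Type*} [DecidableEq V] {G : SimpleGraph V} {lam : V → ℕ}

theorem edgeDeg_mono {H K : Finset (Sym2 V)} (hHK : H ⊆ K) (v : V) :
    edgeDeg H v ≤ edgeDeg K v :=
  card_le_card (filter_subset_filter _ hHK)

theorem edgeDeg_pair {e f : Sym2 V} (hef : e ≠ f) (v : V) :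
    edgeDeg {e, f} v = (if v ∈ e then 1 else 0) + (if v ∈ f then 1 else 0) := by
  rw [edgeDeg, filter_insert, filter_singleton]
  split_ifs <;> simp [hef]

theorem mem_BD_of_subset {H K : Finset (Sym2 V)} (hK : K ∈ BD G lam) (hHK : H ⊆ K) :
    H ∈ BD G lam :=
  ⟨(coe_subset.mpr hHK).trans hK.1, fun v => (edgeDeg_mono hHK v).trans (hK.2 v)⟩

theorem bdAdjGraph_reachable_of_mem {H : Finset (Sym2 V)} (hH : H ∈ BD G lam) {e f : Sym2 V}
    (he : e ∈ H) (hf : f ∈ H) : (bdAdjGraph G lam).Reachable e f := by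
  by_cases hef : e = f
  · exact hef ▸ .rfl
  · have hsub : {e, f} ⊆ H := insert_subset he (singleton_subset_iff.mpr hf)
    exact SimpleGraph.Adj.reachable ⟨hef, mem_BD_of_subset hH hsub⟩

theorem one_le_lam_of_mem_BD {H : Finset (Sym2 V)} (hH : H ∈ BD G lam) {e : Sym2 V}
    (he : e ∈ H) {v : V} (hv : v ∈ e) : 1 ≤ lam v :=
  (card_pos.mpr ⟨e, mem_filter.mpr ⟨he, hv⟩⟩).trans_le (hH.2 v)

theorem eq_of_mem_of_mem_of_lam_le_one {e f : Sym2 V} (hBD : {e, f} ∈ BD G lam) {v : V}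
    (hve : v ∈ e) (hvf : v ∈ f) (hv : lam v ≤ 1) : e = f := by
  by_contra hef
  have hdeg := hBD.2 v
  rw [edgeDeg_pair hef, if_pos hve, if_pos hvf] at hdeg
  omega

theorem exists_mem_mem_lam_le_one_of_not_reachable {H K : Finset (Sym2 V)} {e f : Sym2 V}
    (hH : H ∈ BD G lam) (he : e ∈ H) (hK : K ∈ BD G lam) (hf : f ∈ K)
    (hr : ¬ (bdAdjGraph G lam).Reachable e f) : ∃ v, v ∈ e ∧ v ∈ f ∧ lam v ≤ 1 := by
  have hef : e ≠ f := by
    rintro rfl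
    exact hr .rfl
  have hnot : {e, f} ∉ BD G lam := fun h => hr (SimpleGraph.Adj.reachable ⟨hef, h⟩)
  have hedges : ↑({e, f} : Finset (Sym2 V)) ⊆ G.edgeSet := by
    simpa [Set.insert_subset_iff] using ⟨hH.1 he, hK.1 hf⟩
  obtain ⟨v, hv⟩ : ∃ v, lam v < edgeDeg {e, f} v := by
    by_contra! h
    exact hnot ⟨hedges, h⟩
  rw [edgeDeg_pair hef] at hv
  have hpos_e := fun hve => one_le_lam_of_mem_BD hH he (v := v) hve
  have hpos_f := fun hvf => one_le_lam_of_mem_BD hK hf (v := v) hvf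
  refine ⟨v, ?_, ?_, ?_⟩ <;> split_ifs at hv <;> simp_all

end BoundedDegreeComplex

theorem Sym2.square_matchings {V : Type*} [DecidableEq V] {a b c d : V} (hab : a ≠ b)
    (hac : a ≠ c) (had : a ≠ d) (hbc : b ≠ c) (hbd : b ≠ d) (hcd : c ≠ d) :
    (∀ x, ¬(x ∈ s(a, b) ∧ x ∈ s(c, d))) ∧ (∀ x, ¬(x ∈ s(d, a) ∧ x ∈ s(b, c))) ∧
    ({s(a, b), s(c, d)} : Finset (Sym2 V)) ≠ {s(d, a), s(b, c)} ∧
    {x | x ∈ s(a, b) ∨ x ∈ s(c, d)} = {x | x ∈ s(d, a) ∨ x ∈ s(b, c)} := by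
  refine ⟨?_, ?_, fun h => ?_, ?_⟩
  · simp only [Sym2.mem_iff]
    grind
  · simp only [Sym2.mem_iff]
    grind
  · have : s(a, b) ∈ ({s(d, a), s(b, c)} : Finset (Sym2 V)) := h ▸ mem_insert_self _ _
    simp at this
    grind
  · ext x
    simp only [Set.mem_ofPred_eq, Sym2.mem_iff]
    tauto

/-- if the 1-skeleton of `BD^λ(G)` has two edges `{e₁,e₂}` and `{f₁,f₂}` with `e₁`
and `f₁` in distinct connected components, then `G` contains a 4-cycle; in particular each
`eᵢ ∩ fⱼ` is nonempty and `{e₁,e₂}`, `{f₁,f₂}` are distinct perfect matchings on the same four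
vertices. -/
theorem BD_two_components_square {V : Type*} [DecidableEq V]
    (G : SimpleGraph V) (lam : V → ℕ) (e₁ e₂ f₁ f₂ : Sym2 V)
    (he : e₁ ≠ e₂) (heBD : ({e₁, e₂} : Finset (Sym2 V)) ∈ BD G lam)
    (hf : f₁ ≠ f₂) (hfBD : ({f₁, f₂} : Finset (Sym2 V)) ∈ BD G lam)
    (hsep : ¬ (bdAdjGraph G lam).Reachable e₁ f₁) :
    (∃ a b c d : V, a ≠ b ∧ a ≠ c ∧ a ≠ d ∧ b ≠ c ∧ b ≠ d ∧ c ≠ d ∧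
      G.Adj a b ∧ G.Adj b c ∧ G.Adj c d ∧ G.Adj d a) ∧
    (∃ x, x ∈ e₁ ∧ x ∈ f₁) ∧ (∃ x, x ∈ e₁ ∧ x ∈ f₂) ∧
    (∃ x, x ∈ e₂ ∧ x ∈ f₁) ∧ (∃ x, x ∈ e₂ ∧ x ∈ f₂) ∧
    (∀ x, ¬(x ∈ e₁ ∧ x ∈ e₂)) ∧ (∀ x, ¬(x ∈ f₁ ∧ x ∈ f₂)) ∧
    ({e₁, e₂} : Finset (Sym2 V)) ≠ {f₁, f₂} ∧
    {x | x ∈ e₁ ∨ x ∈ e₂} = {x | x ∈ f₁ ∨ x ∈ f₂} := by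
  have common {e f : Sym2 V} (heH : e ∈ ({e₁, e₂} : Finset _))
      (hfK : f ∈ ({f₁, f₂} : Finset _)) : ∃ v, v ∈ e ∧ v ∈ f ∧ lam v ≤ 1 :=
    exists_mem_mem_lam_le_one_of_not_reachable heBD heH hfBD hfK fun h => hsep <|
      ((bdAdjGraph_reachable_of_mem heBD (by simp) heH).trans h).trans
        (bdAdjGraph_reachable_of_mem hfBD hfK (by simp))
  obtain ⟨a, ha₁, haf₁, hla⟩ := common (e := e₁) (f := f₁) (by simp) (by simp)
  obtain ⟨b, hb₁, hbf₂, hlb⟩ := common (e := e₁) (f := f₂) (by simp) (by simp)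
  obtain ⟨c, hc₂, hcf₂, hlc⟩ := common (e := e₂) (f := f₂) (by simp) (by simp)
  obtain ⟨d, hd₂, hdf₁, hld⟩ := common (e := e₂) (f := f₁) (by simp) (by simp)
  have hab : a ≠ b := fun h => hf (eq_of_mem_of_mem_of_lam_le_one hfBD haf₁ (h ▸ hbf₂) hla)
  have hac : a ≠ c := fun h => he (eq_of_mem_of_mem_of_lam_le_one heBD ha₁ (h ▸ hc₂) hla)
  have had : a ≠ d := fun h => he (eq_of_mem_of_mem_of_lam_le_one heBD ha₁ (h ▸ hd₂) hla)
  have hbc : b ≠ c := fun h => he (eq_of_mem_of_mem_of_lam_le_one heBD hb₁ (h ▸ hc₂) hlb)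
  have hbd : b ≠ d := fun h => he (eq_of_mem_of_mem_of_lam_le_one heBD hb₁ (h ▸ hd₂) hlb)
  have hcd : c ≠ d := fun h => hf (eq_of_mem_of_mem_of_lam_le_one hfBD (h ▸ hdf₁) hcf₂ hlc)
  obtain rfl : e₁ = s(a, b) := (Sym2.mem_and_mem_iff hab).mp ⟨ha₁, hb₁⟩
  obtain rfl : e₂ = s(c, d) := (Sym2.mem_and_mem_iff hcd).mp ⟨hc₂, hd₂⟩
  obtain rfl : f₁ = s(d, a) := (Sym2.mem_and_mem_iff had.symm).mp ⟨hdf₁, haf₁⟩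
  obtain rfl : f₂ = s(b, c) := (Sym2.mem_and_mem_iff hbc).mp ⟨hbf₂, hcf₂⟩
  have hadj : G.Adj a b ∧ G.Adj c d := by simpa [Set.insert_subset_iff] using heBD.1
  have hadj' : G.Adj d a ∧ G.Adj b c := by simpa [Set.insert_subset_iff] using hfBD.1
  exact ⟨⟨a, b, c, d, hab, hac, had, hbc, hbd, hcd, hadj.1, hadj'.2, hadj.2, hadj'.1⟩,
    ⟨a, by simp⟩, ⟨b, by simp⟩, ⟨d, by simp⟩, ⟨c, by simp⟩,
    Sym2.square_matchings hab hac had hbc hbd hcd⟩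
end

section
/- If G is a forest (a simple graph with no cycles), then for any labelling λ : V(G) → ℕ, the bounded degree complex BD^λ(G) has at most one connected component containing more than one vertex. -/
open Finset

section helpers
variable {V : Type*} [DecidableEq V] {G : SimpleGraph V} {lam : V → ℕ} {e f : Sym2 V} {v : V}

lemma mem_edgeSet_of_pair (h : ({e, f} : Finset (Sym2 V)) ∈ BD G lam) :
    e ∈ G.edgeSet ∧ f ∈ G.edgeSet :=
  ⟨h.1 (by simp), h.1 (by simp)⟩

lemma one_le_lam_of_pair (h : ({e, f} : Finset (Sym2 V)) ∈ BD G lam) (hv : v ∈ e) :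
    1 ≤ lam v := by
  refine le_trans ?_ (h.2 v)
  have he : e ∈ ({e, f} : Finset (Sym2 V)).filter (fun x => v ∈ x) := by simp [hv]
  exact Finset.card_pos.mpr ⟨e, he⟩

lemma one_le_lam_of_pair' (h : ({e, f} : Finset (Sym2 V)) ∈ BD G lam) (hv : v ∈ f) :
    1 ≤ lam v :=
  one_le_lam_of_pair (by rwa [Finset.pair_comm]) hv

lemma two_le_lam_of_pair (hne : e ≠ f) (h : ({e, f} : Finset (Sym2 V)) ∈ BD G lam)
    (hve : v ∈ e) (hvf : v ∈ f) : 2 ≤ lam v := by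
  refine le_trans ?_ (h.2 v)
  unfold edgeDeg
  have : ({e, f} : Finset (Sym2 V)).filter (fun x => v ∈ x) = {e, f} := by
    refine Finset.filter_true_of_mem ?_
    intro x hx
    rcases Finset.mem_insert.mp hx with rfl | hx
    · exact hve
    · rcases Finset.mem_singleton.mp hx with rfl; exact hvf
  rw [this, Finset.card_pair hne]

lemma pair_mem_BD (he : e ∈ G.edgeSet) (hf : f ∈ G.edgeSet)
    (h1 : ∀ v, v ∈ e → 1 ≤ lam v) (h1' : ∀ v, v ∈ f → 1 ≤ lam v)
    (h2 : ∀ v, v ∈ e → v ∈ f → 2 ≤ lam v) :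
    ({e, f} : Finset (Sym2 V)) ∈ BD G lam := by
  constructor
  · intro x hx
    simp only [Finset.coe_insert, Finset.coe_singleton, Set.mem_insert_iff,
      Set.mem_singleton_iff] at hx
    rcases hx with rfl | rfl <;> assumption
  · intro v
    unfold edgeDeg
    by_cases hve : v ∈ e <;> by_cases hvf : v ∈ f
    · calc (({e, f} : Finset (Sym2 V)).filter (fun x => v ∈ x)).card
          ≤ ({e, f} : Finset (Sym2 V)).card := Finset.card_filter_le _ _
        _ ≤ 2 := Finset.card_insert_le _ _ |>.trans (by simp)
        _ ≤ lam v := h2 v hve hvf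
    · have hsub : ({e, f} : Finset (Sym2 V)).filter (fun x => v ∈ x) ⊆ {e} := by
        intro x hx
        simp only [Finset.mem_filter, Finset.mem_insert, Finset.mem_singleton] at hx ⊢
        rcases hx.1 with rfl | rfl
        · rfl
        · exact absurd hx.2 hvf
      calc _ ≤ ({e} : Finset (Sym2 V)).card := Finset.card_le_card hsub
        _ ≤ lam v := by simpa using h1 v hve
    · have hsub : ({e, f} : Finset (Sym2 V)).filter (fun x => v ∈ x) ⊆ {f} := by
        intro x hx
        simp only [Finset.mem_filter, Finset.mem_insert, Finset.mem_singleton] at hx ⊢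
        rcases hx.1 with rfl | rfl
        · exact absurd hx.2 hve
        · rfl
      calc _ ≤ ({f} : Finset (Sym2 V)).card := Finset.card_le_card hsub
        _ ≤ lam v := by simpa using h1' v hvf
    · have : ({e, f} : Finset (Sym2 V)).filter (fun x => v ∈ x) = ∅ := by
        refine Finset.filter_eq_empty_iff.mpr ?_
        intro x hx
        rcases Finset.mem_insert.mp hx with rfl | hx
        · exact hve
        · rcases Finset.mem_singleton.mp hx with rfl; exact hvf
      simp [this]

/-- One step of reachability: if all degree constraints hold for the pair, reachable. -/
lemma reach_step (he : e ∈ G.edgeSet) (hf : f ∈ G.edgeSet)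
    (h1 : ∀ v, v ∈ e → 1 ≤ lam v) (h1' : ∀ v, v ∈ f → 1 ≤ lam v)
    (h2 : ∀ v, v ∈ e → v ∈ f → 2 ≤ lam v) :
    (bdAdjGraph G lam).Reachable e f := by
  by_cases hef : e = f
  · exact hef ▸ SimpleGraph.Reachable.refl e
  · exact SimpleGraph.Adj.reachable ⟨hef, pair_mem_BD he hf h1 h1' h2⟩

end helpers

lemma no_four_cycle {V : Type*} {G : SimpleGraph V} (hG : G.IsAcyclic) {v a b x : V}
    (hva : G.Adj v a) (hvb : G.Adj v b) (hax : G.Adj a x) (hbx : G.Adj b x)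
    (hab : a ≠ b) (hvx : v ≠ x) : False := by
  have hva' := hva.ne
  have hvb' := hvb.ne
  have hax' := hax.ne
  have hbx' := hbx.ne
  let p : G.Walk v x := SimpleGraph.Walk.cons hva (SimpleGraph.Walk.cons hax SimpleGraph.Walk.nil)
  let q : G.Walk v x := SimpleGraph.Walk.cons hvb (SimpleGraph.Walk.cons hbx SimpleGraph.Walk.nil)
  have hp : p.IsPath := by
    simp [p, SimpleGraph.Walk.isPath_def, hva', hvx, hax']
  have hq : q.IsPath := by
    simp [q, SimpleGraph.Walk.isPath_def, hvb', hvx, hbx']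
  have := SimpleGraph.isAcyclic_iff_path_unique.mp hG ⟨p, hp⟩ ⟨q, hq⟩
  have hpq : p = q := congrArg Subtype.val this
  have ha : a ∈ q.support := by rw [← hpq]; simp [p]
  simp [q] at ha
  rcases ha with rfl | rfl | rfl
  · exact hva' rfl
  · exact hab rfl
  · exact hax' rfl

/-- for a forest `G`, the complex `BD^λ(G)` has at most one connected component
with more than one vertex: any two non-isolated vertices of `BD^λ(G)` are connected in its
1-skeleton. -/
theorem BD_forest_one_big_component {V : Type*} [DecidableEq V]
    (G : SimpleGraph V) (hG : G.IsAcyclic) (lam : V → ℕ)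
    (e₁ e₂ f₁ f₂ : Sym2 V)
    (he : e₁ ≠ e₂) (heBD : ({e₁, e₂} : Finset (Sym2 V)) ∈ BD G lam)
    (hf : f₁ ≠ f₂) (hfBD : ({f₁, f₂} : Finset (Sym2 V)) ∈ BD G lam) :
    (bdAdjGraph G lam).Reachable e₁ f₁ := by
  classical
  by_cases hef : e₁ = f₁
  · exact hef ▸ SimpleGraph.Reachable.refl e₁
  obtain ⟨he1S, he2S⟩ := mem_edgeSet_of_pair heBD
  obtain ⟨hf1S, hf2S⟩ := mem_edgeSet_of_pair hfBD
  have h1e1 : ∀ v, v ∈ e₁ → 1 ≤ lam v := fun v hv => one_le_lam_of_pair heBD hv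
  have h1e2 : ∀ v, v ∈ e₂ → 1 ≤ lam v := fun v hv => one_le_lam_of_pair' heBD hv
  have h1f1 : ∀ v, v ∈ f₁ → 1 ≤ lam v := fun v hv => one_le_lam_of_pair hfBD hv
  have h1f2 : ∀ v, v ∈ f₂ → 1 ≤ lam v := fun v hv => one_le_lam_of_pair' hfBD hv
  have hd1 : ¬e₁.IsDiag := G.not_isDiag_of_mem_edgeSet he1S
  have hdf1 : ¬f₁.IsDiag := G.not_isDiag_of_mem_edgeSet hf1S
  have adjE : (bdAdjGraph G lam).Adj e₁ e₂ := ⟨he, heBD⟩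
  have adjF : (bdAdjGraph G lam).Adj f₁ f₂ := ⟨hf, hfBD⟩
  by_cases hcap : ∃ v, v ∈ e₁ ∧ v ∈ f₁
  · obtain ⟨v, hv1, hv2⟩ := hcap
    have hvuniq : ∀ w, w ∈ e₁ → w ∈ f₁ → w = v := by
      intro w hw1 hw2
      by_contra hwv
      have h1 : e₁ = s(w, v) := (Sym2.mem_and_mem_iff hwv).mp ⟨hw1, hv1⟩
      have h2 : f₁ = s(w, v) := (Sym2.mem_and_mem_iff hwv).mp ⟨hw2, hv2⟩
      exact hef (h1.trans h2.symm)
    by_cases hlv : 2 ≤ lam v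
    · exact SimpleGraph.Adj.reachable
        ⟨hef, pair_mem_BD he1S hf1S h1e1 h1f1 (fun w hw1 hw2 => (hvuniq w hw1 hw2) ▸ hlv)⟩
    · -- lam v = 1
      have hv_e2 : v ∉ e₂ := fun h => hlv (two_le_lam_of_pair he heBD hv1 h)
      have hv_f2 : v ∉ f₂ := fun h => hlv (two_le_lam_of_pair hf hfBD hv2 h)
      obtain ⟨a, hae⟩ : ∃ a, s(v, a) = e₁ := ⟨_, Sym2.other_spec hv1⟩
      have ha_mem : a ∈ e₁ := hae ▸ Sym2.mem_mk_right v a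
      have hav : a ≠ v := by
        rintro rfl
        exact hd1 (by rw [← hae]; exact Sym2.mk_isDiag_iff.mpr rfl)
      obtain ⟨b, hbf⟩ : ∃ b, s(v, b) = f₁ := ⟨_, Sym2.other_spec hv2⟩
      have hb_mem : b ∈ f₁ := hbf ▸ Sym2.mem_mk_right v b
      have hbv : b ≠ v := by
        rintro rfl
        exact hdf1 (by rw [← hbf]; exact Sym2.mk_isDiag_iff.mpr rfl)
      have hab : a ≠ b := by
        rintro rfl
        exact hef (hae.symm.trans hbf)
      by_cases h2f1 : ∀ w, w ∈ e₂ → w ∈ f₁ → 2 ≤ lam w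
      · exact adjE.reachable.trans (reach_step he2S hf1S h1e2 h1f1 h2f1)
      · push_neg at h2f1
        obtain ⟨w, hw2, hwf1, hlw⟩ := h2f1
        have hwb : w = b := by
          rw [← hbf] at hwf1
          rcases Sym2.mem_iff.mp hwf1 with rfl | rfl
          · exact absurd hw2 hv_e2
          · rfl
        rw [hwb] at hw2 hlw
        have hlb : ¬2 ≤ lam b := not_le.mpr hlw
        have hb_f2 : b ∉ f₂ := fun h => hlb (two_le_lam_of_pair hf hfBD hb_mem h)
        by_cases h2e1 : ∀ u, u ∈ f₂ → u ∈ e₁ → 2 ≤ lam u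
        · exact (reach_step he1S hf2S h1e1 h1f2
            (fun u hu1 hu2 => h2e1 u hu2 hu1)).trans adjF.reachable.symm
        · push_neg at h2e1
          obtain ⟨u, hu2, hue1, hlu⟩ := h2e1
          have hua : u = a := by
            rw [← hae] at hue1
            rcases Sym2.mem_iff.mp hue1 with rfl | rfl
            · exact absurd hu2 hv_f2
            · rfl
          rw [hua] at hu2 hlu
          have hla : ¬2 ≤ lam a := not_le.mpr hlu
          have ha_e2 : a ∉ e₂ := fun h => hla (two_le_lam_of_pair he heBD ha_mem h)
          -- e₂ = s(b, x), f₂ = s(a, y)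
          have hde2 : ¬e₂.IsDiag := G.not_isDiag_of_mem_edgeSet he2S
          have hdf2 : ¬f₂.IsDiag := G.not_isDiag_of_mem_edgeSet hf2S
          obtain ⟨x, hxe⟩ : ∃ x, s(b, x) = e₂ := ⟨_, Sym2.other_spec hw2⟩
          have hx_mem : x ∈ e₂ := hxe ▸ Sym2.mem_mk_right b x
          have hxb : x ≠ b := by
            rintro rfl
            exact hde2 (by rw [← hxe]; exact Sym2.mk_isDiag_iff.mpr rfl)
          have hxv : x ≠ v := fun h => hv_e2 (h ▸ hx_mem)
          have hxa : x ≠ a := fun h => ha_e2 (h ▸ hx_mem)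
          obtain ⟨y, hyf⟩ : ∃ y, s(a, y) = f₂ := ⟨_, Sym2.other_spec hu2⟩
          have hy_mem : y ∈ f₂ := hyf ▸ Sym2.mem_mk_right a y
          have hya : y ≠ a := by
            rintro rfl
            exact hdf2 (by rw [← hyf]; exact Sym2.mk_isDiag_iff.mpr rfl)
          have hyv : y ≠ v := fun h => hv_f2 (h ▸ hy_mem)
          have hyb : y ≠ b := fun h => hb_f2 (h ▸ hy_mem)
          by_cases hxy : x = y
          · -- 4-cycle v-a-x-b-v in G
            subst hxy
            have hva : G.Adj v a := G.mem_edgeSet.mp (hae ▸ he1S)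
            have hvb : G.Adj v b := G.mem_edgeSet.mp (hbf ▸ hf1S)
            have hax : G.Adj a x := G.mem_edgeSet.mp (hyf ▸ hf2S)
            have hbx : G.Adj b x := G.mem_edgeSet.mp (hxe ▸ he2S)
            exact absurd (no_four_cycle hG hva hvb hax hbx hab (Ne.symm hxv)) id
          · -- e₂ and f₂ are disjoint
            have hdisj : ∀ z, z ∈ e₂ → z ∈ f₂ → 2 ≤ lam z := by
              intro z hz1 hz2
              exfalso
              rw [← hxe] at hz1
              rw [← hyf] at hz2
              rcases Sym2.mem_iff.mp hz1 with rfl | rfl <;>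
                rcases Sym2.mem_iff.mp hz2 with h | h
              · exact hab h.symm
              · exact hyb h.symm
              · exact hxa h
              · exact hxy h
            exact adjE.reachable.trans
              ((reach_step he2S hf2S h1e2 h1f2 hdisj).trans adjF.reachable.symm)
  · -- no common vertex: directly adjacent
    push_neg at hcap
    exact SimpleGraph.Adj.reachable
      ⟨hef, pair_mem_BD he1S hf1S h1e1 h1f1 (fun w hw1 hw2 => absurd hw2 (hcap w hw1))⟩
end

section
/- Define a simplicial complex K to be a combinatorial grape if either K has at most one vertex, or there exists a vertex a of K such that the link (K:a) is contained in a cone that is contained in the face-deletion (K,a), and both (K:a) and (K,a) are combinatorial grapes. Then for every forest F and every labelling λ : V(F) → ℕ, the bounded degree complex BD^λ(F) is a combinatorial grape. -/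
open Finset

/-- The link `(K : a)` of the vertex `a` in `K`. -/
def linkC {α : Type*} [DecidableEq α] (K : Set (Finset α)) (a : α) : Set (Finset α) :=
  {τ | τ ∈ K ∧ a ∉ τ ∧ insert a τ ∈ K}

/-- The face-deletion `(K, a)` of the vertex `a` in `K`. -/
def delC {α : Type*} [DecidableEq α] (K : Set (Finset α)) (a : α) : Set (Finset α) :=
  {τ | τ ∈ K ∧ a ∉ τ}

/-- The cone `C_a(L)` with apex `a`: faces are `τ ∪ s` with `τ ∈ L` and `s ⊆ {a}`. -/
def coneC {α : Type*} [DecidableEq α] (a : α) (L : Set (Finset α)) : Set (Finset α) :=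
  {σ | ∃ τ ∈ L, ∃ s ⊆ ({a} : Finset α), σ = τ ∪ s}

/-- A combinatorial grape: either `K` has at most one vertex, or there is a vertex `a` such that
the link `(K : a)` is contained in a cone contained in the face-deletion `(K, a)`, and both the
link and the face-deletion are combinatorial grapes. -/
inductive IsGrape {α : Type*} [DecidableEq α] : Set (Finset α) → Prop
  | atMostOneVertex (K : Set (Finset α)) (h : ∀ a b : α, {a} ∈ K → {b} ∈ K → a = b) :
      IsGrape K
  | wedge (K : Set (Finset α)) (a : α) (ha : {a} ∈ K)
      (hcone : ∃ (b : α) (L : Set (Finset α)), linkC K a ⊆ coneC b L ∧ coneC b L ⊆ delC K a)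
      (hlink : IsGrape (linkC K a)) (hdel : IsGrape (delC K a)) : IsGrape K

/-! Induction on the number of edges. An edge with an endpoint labelled `0` is not a face, so
deleting it from `F` does not change `K = BD^λ(F)`. Otherwise take a leaf `x` of `F` with
neighbour `u`, and an edge `a ≠ xu` through `u` (any other edge if `xu` is a component by
itself). Every face `τ` of `(K : a)` extends by `xu`: no other edge of `τ` meets `x`, and `u` has
spare capacity because `τ` also extends by `a`. Hence `(K : a)` lies in the cone with apex `xu`
over the link of `xu` in `(K, a)`, which lies in `(K, a)`. Both `(K : a)` and `(K, a)` are
bounded degree complexes of `F - a`, with the labels at the ends of `a` lowered by one in the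
case of the link, so the induction hypothesis applies to them. -/

section Complex

variable {α : Type*} [DecidableEq α] {K : Set (Finset α)} {a b : α}

theorem IsLowerSet.delC (hK : IsLowerSet K) : IsLowerSet (delC K a) :=
  fun _ _ hst hs => ⟨hK hst hs.1, fun ha => hs.2 (hst ha)⟩

theorem delC_eq_self (hK : IsLowerSet K) (ha : {a} ∉ K) : delC K a = K := by
  ext τ
  exact ⟨fun hτ => hτ.1, fun hτ => ⟨hτ, fun haτ => ha (hK (singleton_subset_iff.mpr haτ) hτ)⟩⟩

theorem coneC_linkC_subset (hK : IsLowerSet K) : coneC b (linkC K b) ⊆ K := by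
  rintro _ ⟨τ, ⟨-, -, hbτ⟩, s, hs, rfl⟩
  exact hK (union_subset (subset_insert b τ) (hs.trans (by simp))) hbτ

theorem mem_coneC_linkC (hK : IsLowerSet K) {τ : Finset α} (h : insert b τ ∈ K) :
    τ ∈ coneC b (linkC K b) := by
  refine ⟨τ.erase b, ⟨hK ((erase_subset b τ).trans (subset_insert b τ)) h, notMem_erase b τ,
    hK (insert_subset_insert b (erase_subset b τ)) h⟩, τ ∩ {b}, inter_subset_right, ?_⟩
  ext e
  by_cases he : e = b <;> simp [he]

theorem IsGrape.of_forall_insert_mem (hK : IsLowerSet K) (ha : {a} ∈ K) (hab : a ≠ b)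
    (hins : ∀ τ ∈ linkC K a, insert b τ ∈ K) (hlink : IsGrape (linkC K a))
    (hdel : IsGrape (delC K a)) : IsGrape K := by
  refine .wedge K a ha ⟨b, linkC (delC K a) b, fun τ hτ => mem_coneC_linkC hK.delC ?_,
    coneC_linkC_subset hK.delC⟩ hlink hdel
  exact ⟨hins τ hτ, by simpa [hab] using hτ.2.1⟩

end Complex

section BoundedDegree

variable {V : Type*} [DecidableEq V] {G : SimpleGraph V} {lam : V → ℕ}
  {τ : Finset (Sym2 V)} {a : Sym2 V}

theorem edgeDeg_insert (ha : a ∉ τ) (v : V) :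
    edgeDeg (insert a τ) v = edgeDeg τ v + if v ∈ a then 1 else 0 := by
  unfold edgeDeg
  rw [filter_insert]
  split_ifs
  · rw [card_insert_of_notMem fun h => ha (mem_of_mem_filter _ h)]
  · rfl

theorem edgeDeg_singleton (a : Sym2 V) (v : V) : edgeDeg {a} v = if v ∈ a then 1 else 0 := by
  unfold edgeDeg
  rw [filter_singleton]
  split_ifs <;> rfl

theorem edgeDeg_eq_zero_of_forall_adj_eq {x u : V} (hτ : ↑τ ⊆ G.edgeSet)
    (hx : ∀ z, G.Adj x z → z = u) (hxu : s(x, u) ∉ τ) : edgeDeg τ x = 0 := by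
  refine card_eq_zero.mpr (filter_eq_empty_iff.mpr fun e he hxe => ?_)
  obtain ⟨z, rfl⟩ := Sym2.mem_iff_exists.mp hxe
  exact hxu (hx z (hτ he) ▸ he)

theorem isLowerSet_BD : IsLowerSet (BD G lam) :=
  fun _ _ hst hs => ⟨(coe_subset.mpr hst).trans hs.1,
    fun v => (card_le_card (filter_subset_filter _ hst)).trans (hs.2 v)⟩

theorem BD_mono {lam' : V → ℕ} (h : ∀ v, lam v ≤ lam' v) : BD G lam ⊆ BD G lam' :=
  fun _ hτ => ⟨hτ.1, fun v => (hτ.2 v).trans (h v)⟩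

theorem mem_BD_deleteEdges_iff : τ ∈ BD (G.deleteEdges {a}) lam ↔ τ ∈ BD G lam ∧ a ∉ τ := by
  simp only [BD, Set.mem_ofPred_eq, SimpleGraph.edgeSet_deleteEdges, Set.subset_sdiff,
    Set.disjoint_singleton_right, mem_coe]
  tauto

theorem delC_BD : delC (BD G lam) a = BD (G.deleteEdges {a}) lam := by
  ext τ
  exact mem_BD_deleteEdges_iff.symm

theorem insert_mem_BD_iff (ha : a ∉ τ) :
    insert a τ ∈ BD G lam ↔
      {a} ∈ BD G lam ∧ τ ∈ BD G (fun v => lam v - if v ∈ a then 1 else 0) := by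
  have hdeg : ∀ v, edgeDeg τ v + (if v ∈ a then 1 else 0) ≤ lam v ↔
      (if v ∈ a then 1 else 0) ≤ lam v ∧ edgeDeg τ v ≤ lam v - if v ∈ a then 1 else 0 :=
    fun v => by omega
  simp only [BD, Set.mem_ofPred_eq, coe_insert, coe_singleton, Set.insert_subset_iff,
    Set.singleton_subset_iff, edgeDeg_insert ha, edgeDeg_singleton, hdeg, forall_and]
  tauto

theorem linkC_BD (ha : {a} ∈ BD G lam) :
    linkC (BD G lam) a = BD (G.deleteEdges {a}) (fun v => lam v - if v ∈ a then 1 else 0) := by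
  ext τ
  rw [mem_BD_deleteEdges_iff]
  constructor
  · rintro ⟨-, haτ, hins⟩
    exact ⟨((insert_mem_BD_iff haτ).mp hins).2, haτ⟩
  · rintro ⟨hτ, haτ⟩
    exact ⟨BD_mono (fun v => Nat.sub_le _ _) hτ, haτ, (insert_mem_BD_iff haτ).mpr ⟨ha, hτ⟩⟩

end BoundedDegree

section Forest

open SimpleGraph

variable {V : Type*} {G : SimpleGraph V}

/-- The start of a longest path is a leaf. -/
theorem SimpleGraph.IsAcyclic.exists_leaf [Finite V] (hG : G.IsAcyclic) {v w : V}
    (hvw : G.Adj v w) : ∃ x u, G.Adj x u ∧ ∀ z, G.Adj x z → z = u := by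
  have : Nonempty V := ⟨v⟩
  obtain ⟨x, y, p, hp, hmax⟩ := Walk.exists_isPath_forall_isPath_length_le_length G
  have hnil : ¬p.Nil := fun h => by
    have := hmax v w _ (Walk.IsPath.of_adj hvw)
    simp [h.length_eq_zero] at this
  refine ⟨x, p.snd, p.adj_snd hnil, fun z hxz => hG.eq_snd_of_adj_start hp hxz ?_⟩
  by_contra hz
  have := hmax z y _ (hp.cons hz (h := hxz.symm))
  simp at this

theorem SimpleGraph.IsAcyclic.exists_pendant_edge [Finite V] (hG : G.IsAcyclic)
    (hE : G.edgeSet.Nontrivial) :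
    ∃ x u a, G.Adj x u ∧ (∀ z, G.Adj x z → z = u) ∧ a ∈ G.edgeSet ∧ a ≠ s(x, u) ∧
      (u ∈ a ∨ ∀ z, G.Adj u z → z = x) := by
  obtain ⟨e₁, he₁, e₂, he₂, hne⟩ := hE
  obtain ⟨v, w⟩ := e₁
  obtain ⟨x, u, hxu, hx⟩ := hG.exists_leaf he₁
  by_cases hu : ∃ z, G.Adj u z ∧ z ≠ x
  · obtain ⟨z, huz, hzx⟩ := hu
    refine ⟨x, u, s(u, z), hxu, hx, huz, fun h => ?_, .inl (Sym2.mem_mk_left u z)⟩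
    rcases Sym2.eq_iff.mp h with ⟨hux, -⟩ | ⟨-, hzx'⟩
    · exact hxu.ne hux.symm
    · exact hzx hzx'
  · have hu : ∀ z, G.Adj u z → z = x := fun z huz => by_contra fun h => hu ⟨z, huz, h⟩
    by_cases h₁ : s(v, w) = s(x, u)
    · exact ⟨x, u, e₂, hxu, hx, he₂, h₁ ▸ hne.symm, .inr hu⟩
    · exact ⟨x, u, s(v, w), hxu, hx, he₁, h₁, .inr hu⟩

end Forest

section Grape

variable {V : Type*} [DecidableEq V] {G : SimpleGraph V} {lam : V → ℕ}

theorem insert_mem_BD_of_leaf {x u : V} {a : Sym2 V} {τ : Finset (Sym2 V)}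
    (hxu : {s(x, u)} ∈ BD G lam) (hx : ∀ z, G.Adj x z → z = u)
    (hu : u ∈ a ∨ ∀ z, G.Adj u z → z = x) (hτ : τ ∈ linkC (BD G lam) a) :
    insert s(x, u) τ ∈ BD G lam := by
  obtain ⟨hτK, haτ, hins⟩ := hτ
  by_cases hxuτ : s(x, u) ∈ τ
  · rwa [insert_eq_of_mem hxuτ]
  refine (insert_mem_BD_iff hxuτ).mpr ⟨hxu, hτK.1, fun v => ?_⟩
  by_cases hv : v ∈ s(x, u)
  · rcases Sym2.mem_iff.mp hv with rfl | rfl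
    · simp [edgeDeg_eq_zero_of_forall_adj_eq hτK.1 hx hxuτ]
    · rcases hu with hu | hu
      · simpa [hu] using ((insert_mem_BD_iff haτ).mp hins).2.2 v
      · simp [edgeDeg_eq_zero_of_forall_adj_eq hτK.1 hu (by rwa [Sym2.eq_swap])]
  · simpa [hv] using hτK.2 v

theorem isGrape_BD_of_forall_isGrape_deleteEdges [Finite V] (hG : G.IsAcyclic)
    (ih : ∀ e ∈ G.edgeSet, ∀ lam : V → ℕ, IsGrape (BD (G.deleteEdges {e}) lam)) :
    IsGrape (BD G lam) := by
  by_cases hnonface : ∃ e ∈ G.edgeSet, {e} ∉ BD G lam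
  · obtain ⟨e, he, he'⟩ := hnonface
    rw [← delC_eq_self isLowerSet_BD he', delC_BD]
    exact ih e he lam
  have hface : ∀ e ∈ G.edgeSet, {e} ∈ BD G lam :=
    fun e he => by_contra fun h => hnonface ⟨e, he, h⟩
  by_cases hE : G.edgeSet.Subsingleton
  · exact .atMostOneVertex _ fun a b ha hb =>
      hE (ha.1 (mem_singleton_self a)) (hb.1 (mem_singleton_self b))
  obtain ⟨x, u, a, hxu, hx, ha, hne, hu⟩ :=
    hG.exists_pendant_edge (Set.not_subsingleton_iff.mp hE)
  refine .of_forall_insert_mem isLowerSet_BD (hface a ha) hne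
    (fun τ hτ => insert_mem_BD_of_leaf (hface _ hxu) hx hu hτ) ?_ ?_
  · rw [linkC_BD (hface a ha)]
    exact ih a ha _
  · rw [delC_BD]
    exact ih a ha _

end Grape

/-- the bounded degree complex of a forest is a combinatorial grape. -/
theorem BD_forest_isGrape {V : Type*} [Fintype V] [DecidableEq V]
    (G : SimpleGraph V) (hG : G.IsAcyclic) (lam : V → ℕ) :
    IsGrape (BD G lam) := by
  induction hn : G.edgeSet.ncard using Nat.strong_induction_on generalizing G lam with
  | _ n ih =>
    refine isGrape_BD_of_forall_isGrape_deleteEdges hG fun e he lam' => ?_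
    refine ih _ ?_ _ (hG.anti (G.deleteEdges_le _)) lam' rfl
    rw [← hn, SimpleGraph.edgeSet_deleteEdges]
    exact Set.ncard_sdiff_singleton_lt_of_mem he
end
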